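/- Let n ≥ k ≥ 2 be positive integers. Then n ≥ R(k) holds if and only if Σ_{G,H} (-1)^{|E(H)|} cos( −(π(n−2)!/(k!(n−k)!)) · (2|E(G)| − C(n,2)) + (4π/(k(k−1))) · i(G,H) ) = 0, where the summation is over all simple graphs G on the vertex set [n] and all k-uniform hypergraphs H on the vertex set [n]. -/

import Mathlib

/-!
For a fixed graph `W`, the sum over the hypergraphs `U` factorises over the `k`-sets `v`:
`∑_U (-1)^|U| cos (θ + ∑_{v ∈ U} x_v) = ∏_v 2 sin (x_v / 2) · cos (θ + ∑_v (x_v / 2 - π / 2))`.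
Here `x_v = 4π m_v / (k(k-1))`, where `m_v` is the number of edges of `W` inside `v`. Counting
`∑_v m_v = |W| C(n-2,k-2)` in two ways shows that the cosine factor is `cos 0 = 1`, so the inner
sum is `∏_v 2 sin (π m_v / C(k,2))`. As `0 ≤ m_v ≤ C(k,2)`, every factor is nonnegative and vanishes
exactly when `v` is a clique or an independent set of `W`. Hence the total sum vanishes iff every
graph on `[n]` has a homogeneous `k`-set, i.e. iff `R(k) ≤ n`.
-/

open Finset

/-- The k-th diagonal Ramsey number. -/
noncomputable def diagonalRamsey (k : ℕ) : ℕ :=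
  sInf {n : ℕ | 0 < n ∧ ∀ G : SimpleGraph (Fin n),
    (∃ s : Finset (Fin n), G.IsNClique k s) ∨ (∃ s : Finset (Fin n), Gᶜ.IsNClique k s)}

theorem exists_ramsey_bound (s t : ℕ) :
    ∃ N, ∀ (V : Type*) (G : SimpleGraph V) (A : Finset V), N ≤ #A →
      (∃ B ⊆ A, G.IsNClique s B) ∨ ∃ B ⊆ A, Gᶜ.IsNClique t B := by
  classical
  induction s generalizing t with
  | zero => exact ⟨0, fun V G A _ => .inl ⟨∅, empty_subset A, by simp⟩⟩
  | succ s ihs =>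
    induction t with
    | zero => exact ⟨0, fun V G A _ => .inr ⟨∅, empty_subset A, by simp⟩⟩
    | succ t iht =>
      obtain ⟨N₁, hN₁⟩ := ihs (t + 1)
      obtain ⟨N₂, hN₂⟩ := iht
      refine ⟨N₁ + N₂ + 1, fun V G A hA => ?_⟩
      obtain ⟨a, ha⟩ : A.Nonempty := card_pos.1 (by omega)
      set R := (A.erase a).filter (G.Adj a)
      set S := (A.erase a).filter (¬G.Adj a ·)
      have hRA : R ⊆ A := (filter_subset _ _).trans (erase_subset a A)
      have hSA : S ⊆ A := (filter_subset _ _).trans (erase_subset a A)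
      have hRS : #R + #S + 1 = #A := by
        rw [card_filter_add_card_filter_not, card_erase_add_one ha]
      rcases le_or_gt N₁ #R with hR | hR
      · rcases hN₁ V G R hR with ⟨B, hB, hBc⟩ | ⟨B, hB, hBc⟩
        · refine .inl ⟨insert a B, insert_subset ha (hB.trans hRA), hBc.insert fun b hb => ?_⟩
          exact (mem_filter.1 (hB hb)).2
        · exact .inr ⟨B, hB.trans hRA, hBc⟩
      · rcases hN₂ V G S (by omega) with ⟨B, hB, hBc⟩ | ⟨B, hB, hBc⟩
        · exact .inl ⟨B, hB.trans hSA, hBc⟩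
        · refine .inr ⟨insert a B, insert_subset ha (hB.trans hSA), hBc.insert fun b hb => ?_⟩
          obtain ⟨hbA, hab⟩ := mem_filter.1 (hB hb)
          exact (G.compl_adj a b).2 ⟨(ne_of_mem_erase hbA).symm, hab⟩

def RamseyArrow (n k : ℕ) : Prop :=
  ∀ G : SimpleGraph (Fin n), (∃ s, G.IsNClique k s) ∨ ∃ s, Gᶜ.IsNClique k s

theorem RamseyArrow.mono {m n k : ℕ} (hmn : m ≤ n) (h : RamseyArrow m k) : RamseyArrow n k := by
  intro G
  let f : Fin m ↪ Fin n := Fin.castLEEmb hmn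
  have hcompl : (G.comap f)ᶜ = Gᶜ.comap f := by
    ext a b
    simp [f.injective.ne_iff]
  rcases h (G.comap f) with ⟨s, hs⟩ | ⟨s, hs⟩
  · exact .inl ⟨s.map f, hs.map.mono (SimpleGraph.map_comap_le f G)⟩
  · rw [hcompl] at hs
    exact .inr ⟨s.map f, hs.map.mono (SimpleGraph.map_comap_le f Gᶜ)⟩

theorem diagonalRamsey_le_iff {n k : ℕ} (hn : 0 < n) : diagonalRamsey k ≤ n ↔ RamseyArrow n k := by
  refine ⟨fun h => ?_, fun h => Nat.sInf_le ⟨hn, h⟩⟩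
  obtain ⟨N, hN⟩ := exists_ramsey_bound k k
  have hN' : RamseyArrow (N + 1) k := fun G => by
    simpa using hN (Fin (N + 1)) G univ (by simp)
  exact (Nat.sInf_mem (s := {n | 0 < n ∧ RamseyArrow n k}) ⟨N + 1, N.succ_pos, hN'⟩).2.mono h

section PairGraph

variable {V : Type*} [DecidableEq V]

def pairGraph (W : Finset (Finset V)) : SimpleGraph V :=
  SimpleGraph.fromRel fun a b => {a, b} ∈ W

variable {W : Finset (Finset V)}

@[simp]
theorem pairGraph_adj {a b : V} : (pairGraph W).Adj a b ↔ a ≠ b ∧ {a, b} ∈ W := by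
  simp [pairGraph, pair_comm b a]

theorem pairGraph_isClique_iff {v : Finset V} :
    (pairGraph W).IsClique (v : Set V) ↔ powersetCard 2 v ⊆ W := by
  constructor
  · intro h u hu
    obtain ⟨huv, hu2⟩ := mem_powersetCard.1 hu
    obtain ⟨a, b, hab, rfl⟩ := card_eq_two.1 hu2
    exact (pairGraph_adj.1 (h (huv (by simp)) (huv (by simp)) hab)).2
  · intro h a ha b hb hab
    have hsub : {a, b} ⊆ v := insert_subset ha (singleton_subset_iff.2 hb)
    exact pairGraph_adj.2 ⟨hab, h (mem_powersetCard.2 ⟨hsub, card_pair hab⟩)⟩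

theorem compl_pairGraph_isClique_iff (hW : ∀ u ∈ W, #u = 2) {v : Finset V} :
    (pairGraph W)ᶜ.IsClique (v : Set V) ↔ ∀ u ∈ W, ¬u ⊆ v := by
  constructor
  · intro h u hu huv
    obtain ⟨a, b, hab, rfl⟩ := card_eq_two.1 (hW u hu)
    have := h (huv (by simp)) (huv (by simp)) hab
    simp_all
  · intro h a ha b hb hab
    simpa [hab] using fun hab' => h _ hab' (insert_subset ha (singleton_subset_iff.2 hb))

theorem exists_pairGraph_eq [Fintype V] (G : SimpleGraph V) :
    ∃ W ⊆ powersetCard 2 (univ : Finset V), pairGraph W = G := by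
  classical
  refine ⟨(powersetCard 2 univ).filter fun u => G.IsClique (u : Set V), filter_subset _ _, ?_⟩
  ext a b
  by_cases hab : a = b
  · simp [hab]
  · simp [hab, card_pair hab]

theorem filter_subset_powersetCard_two (hW : ∀ u ∈ W, #u = 2) (v : Finset V) :
    W.filter (· ⊆ v) ⊆ powersetCard 2 v := fun u hu =>
  mem_powersetCard.2 ⟨(mem_filter.1 hu).2, hW u (mem_filter.1 hu).1⟩

theorem card_filter_subset_le_choose_two (hW : ∀ u ∈ W, #u = 2) (v : Finset V) :
    #(W.filter (· ⊆ v)) ≤ (#v).choose 2 :=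
  (card_le_card (filter_subset_powersetCard_two hW v)).trans_eq (card_powersetCard 2 v)

theorem card_filter_subset_eq_choose_two_iff (hW : ∀ u ∈ W, #u = 2) (v : Finset V) :
    #(W.filter (· ⊆ v)) = (#v).choose 2 ↔ powersetCard 2 v ⊆ W := by
  rw [← card_powersetCard]
  constructor
  · intro h
    rw [← eq_of_subset_of_card_le (filter_subset_powersetCard_two hW v) h.ge]
    exact filter_subset _ _
  · intro h
    congr 1
    refine (filter_subset_powersetCard_two hW v).antisymm fun u hu => ?_
    exact mem_filter.2 ⟨h hu, (mem_powersetCard.1 hu).1⟩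

end PairGraph

theorem ramseyArrow_iff_forall_pairs (n k : ℕ) :
    RamseyArrow n k ↔ ∀ W ⊆ powersetCard 2 (univ : Finset (Fin n)),
      ∃ v ∈ powersetCard k (univ : Finset (Fin n)),
        #(W.filter (· ⊆ v)) = 0 ∨ #(W.filter (· ⊆ v)) = k.choose 2 := by
  have hpairs : ∀ W ⊆ powersetCard 2 (univ : Finset (Fin n)), ∀ u ∈ W, #u = 2 :=
    fun W hW u hu => (mem_powersetCard.1 (hW hu)).2
  have hgraph : RamseyArrow n k ↔ ∀ W ⊆ powersetCard 2 (univ : Finset (Fin n)),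
      (∃ s, (pairGraph W).IsNClique k s) ∨ ∃ s, (pairGraph W)ᶜ.IsNClique k s := by
    refine ⟨fun h W _ => h _, fun h G => ?_⟩
    obtain ⟨W, hW, rfl⟩ := exists_pairGraph_eq G
    exact h W hW
  rw [hgraph]
  refine forall₂_congr fun W hW => ?_
  have hcount := card_filter_subset_eq_choose_two_iff (hpairs W hW)
  simp only [SimpleGraph.isNClique_iff, pairGraph_isClique_iff,
    compl_pairGraph_isClique_iff (hpairs W hW), mem_powersetCard_univ, card_eq_zero,
    filter_eq_empty_iff]
  constructor
  · rintro (⟨v, hv, rfl⟩ | ⟨v, hv, rfl⟩)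
    · exact ⟨v, rfl, .inr ((hcount v).2 hv)⟩
    · exact ⟨v, rfl, .inl hv⟩
  · rintro ⟨v, rfl, hv | hv⟩
    · exact .inr ⟨v, hv, rfl⟩
    · exact .inl ⟨v, (hcount v).1 hv, rfl⟩

open Real

theorem cos_sub_cos_add (φ y : ℝ) :
    cos φ - cos (φ + y) = 2 * sin (y / 2) * cos (φ + (y / 2 - π / 2)) := by
  rw [cos_sub_cos, show φ + (y / 2 - π / 2) = (φ + (φ + y)) / 2 - π / 2 by ring,
    cos_sub_pi_div_two, show (φ - (φ + y)) / 2 = -(y / 2) by ring, sin_neg]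
  ring

theorem sum_powerset_neg_one_pow_mul_cos {ι : Type*} [DecidableEq ι] (K : Finset ι) (x : ι → ℝ)
    (θ : ℝ) :
    ∑ U ∈ K.powerset, (-1) ^ #U * cos (θ + ∑ v ∈ U, x v) =
      (∏ v ∈ K, 2 * sin (x v / 2)) * cos (θ + ∑ v ∈ K, (x v / 2 - π / 2)) := by
  induction K using Finset.induction_on generalizing θ with
  | empty => simp
  | insert a K ha ih =>
    have hinsert : ∀ U ∈ K.powerset, (-1) ^ #(insert a U) * cos (θ + ∑ v ∈ insert a U, x v) =
        -((-1) ^ #U * cos ((θ + x a) + ∑ v ∈ U, x v)) := fun U hU => by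
      have haU : a ∉ U := fun h => ha (mem_powerset.1 hU h)
      rw [card_insert_of_notMem haU, sum_insert haU, pow_succ, ← add_assoc]
      ring
    rw [sum_powerset_insert ha, sum_congr rfl hinsert, sum_neg_distrib, ih, ih, prod_insert ha,
      sum_insert ha, add_right_comm θ (x a), ← add_assoc θ, add_right_comm θ (x a / 2 - π / 2)]
    linear_combination (∏ v ∈ K, 2 * sin (x v / 2)) *
      cos_sub_cos_add (θ + ∑ v ∈ K, (x v / 2 - π / 2)) (x a)

theorem card_filter_product_eq_sum {α β : Type*} (s : Finset α) (t : Finset β) (r : α → β → Prop)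
    [∀ a b, Decidable (r a b)] :
    #((s ×ˢ t).filter fun p => r p.1 p.2) = ∑ b ∈ t, #(s.filter (r · b)) := by
  simp only [card_filter, sum_product_right]

theorem sum_card_filter_subset_powersetCard {V : Type*} [Fintype V] [DecidableEq V]
    {W : Finset (Finset V)} {j : ℕ} (hW : ∀ u ∈ W, #u = j) {k : ℕ} (hjk : j ≤ k) :
    ∑ v ∈ powersetCard k (univ : Finset V), #(W.filter (· ⊆ v)) =
      #W * (Fintype.card V - j).choose (k - j) := by
  calc ∑ v ∈ powersetCard k univ, #(W.filter (· ⊆ v))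
      = ∑ u ∈ W, #((powersetCard k univ).filter (u ⊆ ·)) :=
        by simp only [card_filter]; exact sum_comm
    _ = ∑ _u ∈ W, (Fintype.card V - j).choose (k - j) := sum_congr rfl fun u hu => by
        rw [card_filter_powersetCard_subset u univ k (subset_univ u) (hW u hu ▸ hjk), card_univ,
          hW u hu]
    _ = #W * (Fintype.card V - j).choose (k - j) := by rw [sum_const, smul_eq_mul]

theorem factorial_div_eq_choose_div {n k : ℕ} (hk : 2 ≤ k) (hkn : k ≤ n) :
    ((n - 2).factorial : ℝ) / (k.factorial * (n - k).factorial) =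
      (n - 2).choose (k - 2) / (2 * k.choose 2) := by
  obtain ⟨j, rfl⟩ : ∃ j, k = j + 2 := ⟨k - 2, by omega⟩
  obtain ⟨m, rfl⟩ : ∃ m, n = m + 2 := ⟨n - 2, by omega⟩
  rw [Nat.cast_choose ℝ (by omega : j + 2 - 2 ≤ m + 2 - 2), Nat.cast_choose_two,
    show m + 2 - 2 - (j + 2 - 2) = m + 2 - (j + 2) by omega]
  simp only [Nat.add_sub_cancel, Nat.factorial_succ, Nat.cast_mul, Nat.cast_add, Nat.cast_ofNat,
    Nat.cast_one]
  rw [show (j : ℝ) + 2 - 1 = j + 1 by ring]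
  field_simp
  ring

theorem sin_pi_mul_div_nonneg {m c : ℕ} (h : m ≤ c) : 0 ≤ sin (π * m / c) := by
  refine sin_nonneg_of_nonneg_of_le_pi (by positivity) ?_
  exact div_le_of_le_mul₀ (by positivity) pi_pos.le
    (mul_le_mul_of_nonneg_left (Nat.cast_le.2 h) pi_pos.le)

theorem sin_pi_mul_div_eq_zero_iff {m c : ℕ} (h : m ≤ c) :
    sin (π * m / c) = 0 ↔ m = 0 ∨ m = c := by
  constructor
  · intro hsin
    by_contra! hm
    have hm0 : (0 : ℝ) < m := by exact_mod_cast Nat.pos_of_ne_zero hm.1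
    have hmc : (m : ℝ) < c := by exact_mod_cast lt_of_le_of_ne h hm.2
    refine (sin_pos_of_pos_of_lt_pi (div_pos (mul_pos pi_pos hm0) (hm0.trans hmc)) ?_).ne' hsin
    rw [div_lt_iff₀ (hm0.trans hmc)]
    exact mul_lt_mul_of_pos_left hmc pi_pos
  · rintro (rfl | rfl)
    · simp
    · rcases eq_or_ne m 0 with rfl | hm
      · simp
      · rw [mul_div_assoc, div_self (by exact_mod_cast hm), mul_one, sin_pi]

theorem sum_powerset_incidence_eq_prod_sin {n k : ℕ} (hk : 2 ≤ k) (hkn : k ≤ n)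
    {W : Finset (Finset (Fin n))} (hW : ∀ u ∈ W, #u = 2) :
    ∑ U ∈ (powersetCard k (univ : Finset (Fin n))).powerset,
        (-1 : ℝ) ^ #U *
          cos (-(π * ((n - 2).factorial : ℝ) / ((k.factorial : ℝ) * ((n - k).factorial : ℝ))) *
              (2 * (#W : ℝ) - (n.choose 2 : ℝ)) +
            4 * π / ((k : ℝ) * ((k : ℝ) - 1)) * (#((W ×ˢ U).filter fun p => p.1 ⊆ p.2) : ℝ)) =
      ∏ v ∈ powersetCard k (univ : Finset (Fin n)),
        2 * sin (π * #(W.filter (· ⊆ v)) / k.choose 2) := by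
  have hc : (k : ℝ) * ((k : ℝ) - 1) = 2 * k.choose 2 := by rw [Nat.cast_choose_two]; ring
  have hc0 : (k.choose 2 : ℝ) ≠ 0 := by exact_mod_cast (Nat.choose_pos hk).ne'
  have hx : ∀ v : Finset (Fin n),
      4 * π / ((k : ℝ) * ((k : ℝ) - 1)) * #(W.filter (· ⊆ v)) / 2 =
        π * #(W.filter (· ⊆ v)) / k.choose 2 := fun v => by
    rw [hc]; field_simp; ring
  -- the phase picked up by `sum_powerset_neg_one_pow_mul_cos` cancels the constant term
  have hphase : -(π * ((n - 2).factorial : ℝ) / ((k.factorial : ℝ) * ((n - k).factorial : ℝ))) *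
        (2 * (#W : ℝ) - (n.choose 2 : ℝ)) +
      ∑ v ∈ powersetCard k (univ : Finset (Fin n)),
        (π * #(W.filter (· ⊆ v)) / k.choose 2 - π / 2) = 0 := by
    have hchoose : (n.choose k * k.choose 2 : ℝ) = n.choose 2 * (n - 2).choose (k - 2) := by
      exact_mod_cast Nat.choose_mul hk
    rw [sum_sub_distrib, ← sum_div, ← mul_sum, ← Nat.cast_sum,
      sum_card_filter_subset_powersetCard hW hk, sum_const, card_powersetCard, card_univ,
      Fintype.card_fin, nsmul_eq_mul, mul_div_assoc, factorial_div_eq_choose_div hk hkn]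
    push_cast
    field_simp
    linear_combination -π * hchoose
  simp only [card_filter_product_eq_sum, Nat.cast_sum, mul_sum]
  rw [sum_powerset_neg_one_pow_mul_cos]
  simp only [hx]
  rw [hphase, cos_zero, mul_one]

/-- A simple graph on `[n]` is identified with its edge set `W ⊆ C([n],2)`, and a
`k`-uniform hypergraph on `[n]` with its edge set `U ⊆ C([n],k)`.  The incidence number
`i(G,H)` is the number of pairs `(u,v) ∈ E(G) × E(H)` with `u ⊆ v`. -/
theorem stmt_5 (n k : ℕ) (hk : 2 ≤ k) (hkn : k ≤ n) :
    diagonalRamsey k ≤ n ↔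
      (∑ W ∈ (Finset.powersetCard 2 (Finset.univ : Finset (Fin n))).powerset,
        ∑ U ∈ (Finset.powersetCard k (Finset.univ : Finset (Fin n))).powerset,
          (-1 : ℝ) ^ U.card *
            Real.cos
              (-(Real.pi * ((n - 2).factorial : ℝ) /
                  ((k.factorial : ℝ) * ((n - k).factorial : ℝ))) *
                (2 * (W.card : ℝ) - (n.choose 2 : ℝ)) +
                4 * Real.pi / ((k : ℝ) * ((k : ℝ) - 1)) *
                  (((W ×ˢ U).filter fun p => p.1 ⊆ p.2).card : ℝ))) = 0 := by
  have hW2 : ∀ W ⊆ powersetCard 2 (univ : Finset (Fin n)), ∀ u ∈ W, #u = 2 :=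
    fun W hW u hu => (mem_powersetCard.1 (hW hu)).2
  have hle : ∀ W ⊆ powersetCard 2 (univ : Finset (Fin n)),
      ∀ v ∈ powersetCard k (univ : Finset (Fin n)), #(W.filter (· ⊆ v)) ≤ k.choose 2 :=
    fun W hW v hv => (mem_powersetCard_univ.1 hv) ▸ card_filter_subset_le_choose_two (hW2 W hW) v
  rw [diagonalRamsey_le_iff (by omega), ramseyArrow_iff_forall_pairs,
    sum_congr rfl fun W hW =>
      sum_powerset_incidence_eq_prod_sin hk hkn (hW2 W (mem_powerset.1 hW)),
    sum_eq_zero_iff_of_nonneg fun W hW => prod_nonneg fun v hv =>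
      mul_nonneg zero_le_two (sin_pi_mul_div_nonneg (hle W (mem_powerset.1 hW) v hv))]
  simp only [mem_powerset, prod_eq_zero_iff, mul_eq_zero, two_ne_zero, false_or]
  exact forall₂_congr fun W hW => exists_congr fun v => and_congr_right fun hv =>
    (sin_pi_mul_div_eq_zero_iff (hle W hW v hv)).symm
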